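/- (Example 1, Condition 6 for the exponential kernel.) In the perturbed-grid setting with grid enumeration, the positivity condition on the θ-derivatives of the exponential kernel holds: for every θ₀ = (θ₁, θ₂) ∈ (0,∞)² and every pair (λ₁, λ₂) ≠ (0,0) of real numbers, liminf_{n→∞} (1/n) Σ_{i,j=1}^n ((λ₁ − λ₂ θ₁ g_{ij}) e^{−θ₂ g_{ij}})² > 0, where g_{ij} := ‖f_i − f_j‖. -/

import Mathlib

/-!
If `λ₁ ≠ 0`, the diagonal terms (`g_ii = 0`) contribute `λ₁²` each. If `λ₁ = 0`, choose
`m^{d₀} ≤ n < (m+1)^{d₀}`: the first `m^{d₀}` inputs sit over the grid `{1,…,m}^{d₀}`, so each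
of them has a neighbour among them, one step away in the first coordinate. Since `δ < 1/2`,
such a pair is at distance at least `1 - 2δ`, and by Parseval at most `√(4 (d₀ + Σ s_k²))`; on
that range `g e^{-θ₂ g}` is bounded below, so each of these `m^{d₀} ≥ n / 2^{d₀}` rows
contributes a fixed positive amount to the sum.
-/

open Filter
open scoped Topology

/-- The perturbed-grid input
`f_i = Σ_{k=1}^{d₀} ((x_i)_k + δ ξ_{i,k}) e_k + Σ_{k>d₀} ξ_{i,k} s_k e_k`. -/
noncomputable def perturbedGridInput {H : Type*} [NormedAddCommGroup H]
    [InnerProductSpace ℝ H] [CompleteSpace H] (e : HilbertBasis ℕ ℝ H)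
    (d₀ : ℕ) (δ : ℝ) (ξ : ℕ → ℕ → ℝ) (s : ℕ → ℝ) (x : ℕ → ℕ → ℕ) (i : ℕ) : H :=
  (∑ k ∈ Finset.range d₀, (((x i k : ℝ)) + δ * ξ i k) • e k)
    + ∑' k : ℕ, (ξ i (d₀ + k) * s (d₀ + k)) • e (d₀ + k)

open scoped InnerProductSpace

theorem Orthonormal.summable_smul {𝕜 E ι : Type*} [RCLike 𝕜] [NormedAddCommGroup E]
    [InnerProductSpace 𝕜 E] [CompleteSpace E] {v : ι → E} (hv : Orthonormal 𝕜 v) {l : ι → 𝕜}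
    (hl : Summable fun i => ‖l i‖ ^ 2) : Summable fun i => l i • v i := by
  simpa using (hv.orthogonalFamily.summable_iff_norm_sq_summable l).2 hl

theorem Orthonormal.inner_eq_of_hasSum {𝕜 E ι : Type*} [RCLike 𝕜] [NormedAddCommGroup E]
    [InnerProductSpace 𝕜 E] {v : ι → E} (hv : Orthonormal 𝕜 v) {l : ι → 𝕜} {y : E}
    (hy : HasSum (fun j => l j • v j) y) (i : ι) : ⟪v i, y⟫_𝕜 = l i := by
  classical
  refine (hy.mapL (innerSL 𝕜 (v i))).unique ?_
  convert hasSum_ite_eq i (l i) using 2 with j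
  rcases eq_or_ne j i with rfl | hji
  · simp [hv.1]
  · simp [hv.2 hji.symm, hji]

theorem HilbertBasis.hasSum_sq_of_hasSum {E ι : Type*} [NormedAddCommGroup E]
    [InnerProductSpace ℝ E] (b : HilbertBasis ι ℝ E) {l : ι → ℝ} {y : E}
    (hy : HasSum (fun i => l i • b i) y) : HasSum (fun i => l i ^ 2) (‖y‖ ^ 2) := by
  have hl : (fun i => l i ^ 2) = fun i => ⟪y, b i⟫_ℝ * ⟪b i, y⟫_ℝ := by
    ext i
    rw [real_inner_comm, b.orthonormal.inner_eq_of_hasSum hy, sq]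
  rw [hl, ← real_inner_self_eq_norm_sq]
  exact b.hasSum_inner_mul_inner y y

theorem Nat.exists_pow_le_lt_succ_pow {d : ℕ} (hd : d ≠ 0) (n : ℕ) :
    ∃ m, m ^ d ≤ n ∧ n < (m + 1) ^ d := by
  have hex : ∃ m, n < (m + 1) ^ d := ⟨n, Nat.lt_succ_self n |>.trans_le (Nat.le_self_pow hd _)⟩
  refine ⟨Nat.find hex, ?_, Nat.find_spec hex⟩
  rcases h : Nat.find hex with _ | m
  · simp [zero_pow hd]
  · exact not_lt.1 (Nat.find_min hex (h ▸ Nat.lt_succ_self m))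

theorem eventually_le_average_of_exists_le {d : ℕ} (hd : d ≠ 0) {t : ℕ → ℕ → ℝ}
    (ht : ∀ i j, 0 ≤ t i j) {c : ℝ} (hc : 0 ≤ c)
    (h : ∀ m, 2 ≤ m → ∀ i < m ^ d, ∃ j < m ^ d, c ≤ t i j) :
    ∀ᶠ n : ℕ in atTop,
      c / 2 ^ d ≤ 1 / (n : ℝ) * ∑ i ∈ Finset.range n, ∑ j ∈ Finset.range n, t i j := by
  filter_upwards [eventually_ge_atTop (2 ^ d)] with n hn
  obtain ⟨m, hmn, hnm⟩ := Nat.exists_pow_le_lt_succ_pow hd n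
  have hm : 2 ≤ m := by
    by_contra! hm
    have : (m + 1) ^ d ≤ 2 ^ d := Nat.pow_le_pow_left (by omega) d
    omega
  have hrow : ∀ i ∈ Finset.range (m ^ d), c ≤ ∑ j ∈ Finset.range n, t i j := by
    intro i hi
    obtain ⟨j, hj, hcj⟩ := h m hm i (Finset.mem_range.1 hi)
    exact hcj.trans (Finset.single_le_sum (fun j _ => ht i j) (Finset.mem_range.2 (by omega)))
  have hsum : (m ^ d : ℕ) * c ≤ ∑ i ∈ Finset.range n, ∑ j ∈ Finset.range n, t i j :=
    calc (m ^ d : ℕ) * c = ∑ _i ∈ Finset.range (m ^ d), c := by simp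
      _ ≤ ∑ i ∈ Finset.range (m ^ d), ∑ j ∈ Finset.range n, t i j := Finset.sum_le_sum hrow
      _ ≤ _ := Finset.sum_le_sum_of_subset_of_nonneg (Finset.range_subset_range.2 hmn)
            fun i _ _ => Finset.sum_nonneg fun j _ => ht i j
  have hn2 : n ≤ 2 ^ d * m ^ d :=
    calc n ≤ (m + 1) ^ d := hnm.le
      _ ≤ (2 * m) ^ d := Nat.pow_le_pow_left (by omega) d
      _ = 2 ^ d * m ^ d := mul_pow 2 m d
  have hn0 : (0 : ℝ) < n := by exact_mod_cast Nat.one_le_two_pow.trans hn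
  calc c / 2 ^ d ≤ (m ^ d : ℕ) * c / n := by
        rw [div_le_div_iff₀ (by positivity) hn0]
        calc c * n ≤ c * (2 ^ d * m ^ d : ℕ) := by gcongr
          _ = (m ^ d : ℕ) * c * 2 ^ d := by push_cast; ring
    _ = 1 / (n : ℝ) * ((m ^ d : ℕ) * c) := by ring
    _ ≤ _ := by gcongr

theorem exists_grid_neighbor {d m : ℕ} (hm : 2 ≤ m) {x : ℕ → ℕ → ℕ}
    (hgrid : Finset.image (fun i => fun k : Fin d => x i (k : ℕ)) (Finset.range (m ^ d))
      = Fintype.piFinset fun _ : Fin d => Finset.Icc 1 m)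
    {i : ℕ} (hi : i < m ^ d) (k₀ : Fin d) :
    ∃ j < m ^ d, |(x i k₀ : ℝ) - x j k₀| = 1 ∧ ∀ k : Fin d, |(x i k : ℝ) - x j k| ≤ 1 := by
  have hxi : ∀ k : Fin d, x i k ∈ Finset.Icc 1 m := Fintype.mem_piFinset.1 <|
    hgrid ▸ Finset.mem_image_of_mem _ (Finset.mem_range.2 hi)
  set v := if x i k₀ < m then x i k₀ + 1 else x i k₀ - 1 with hv
  have hv1 : |(x i k₀ : ℝ) - v| = 1 := by
    have := Finset.mem_Icc.1 (hxi k₀)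
    split_ifs at hv with h
    · simp [hv]
    · rw [hv, Nat.cast_sub (by omega)]; simp
  have hq : Function.update (fun k : Fin d => x i k) k₀ v
      ∈ Fintype.piFinset fun _ : Fin d => Finset.Icc 1 m := by
    refine Fintype.mem_piFinset.2 fun k => ?_
    rcases eq_or_ne k k₀ with rfl | hk
    · have := Finset.mem_Icc.1 (hxi k)
      rw [Function.update_self, Finset.mem_Icc]
      split_ifs at hv <;> omega
    · simpa [Function.update_of_ne hk] using hxi k
  obtain ⟨j, hj, hxj⟩ := Finset.mem_image.1 (hgrid ▸ hq)
  have hxjk := congrFun hxj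
  refine ⟨j, Finset.mem_range.1 hj, by simpa [hxjk k₀] using hv1, fun k => ?_⟩
  rcases eq_or_ne k k₀ with rfl | hk
  · simpa [hxjk k] using hv1.le
  · simp [hxjk k, Function.update_of_ne hk]

def perturbedGridCoord (d₀ : ℕ) (δ : ℝ) (ξ : ℕ → ℕ → ℝ) (s : ℕ → ℝ) (x : ℕ → ℕ → ℕ)
    (i k : ℕ) : ℝ :=
  if k < d₀ then x i k + δ * ξ i k else ξ i k * s k

section PerturbedGrid

variable {H : Type*} [NormedAddCommGroup H] [InnerProductSpace ℝ H] [CompleteSpace H]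
  (e : HilbertBasis ℕ ℝ H) {d₀ : ℕ} {δ : ℝ} {ξ : ℕ → ℕ → ℝ} {s : ℕ → ℝ} {x : ℕ → ℕ → ℕ}

theorem hasSum_perturbedGridInput (hξ : ∀ i k, |ξ i k| ≤ 1)
    (hssum : Summable fun k : ℕ => s (d₀ + k) ^ 2) (i : ℕ) :
    HasSum (fun k => perturbedGridCoord d₀ δ ξ s x i k • e k)
      (perturbedGridInput e d₀ δ ξ s x i) := by
  rw [← hasSum_nat_add_iff' d₀]
  have hhead : ∑ k ∈ Finset.range d₀, perturbedGridCoord d₀ δ ξ s x i k • e k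
      = ∑ k ∈ Finset.range d₀, ((x i k : ℝ) + δ * ξ i k) • e k :=
    Finset.sum_congr rfl fun k hk => by rw [perturbedGridCoord, if_pos (Finset.mem_range.1 hk)]
  have htail : (fun k => perturbedGridCoord d₀ δ ξ s x i (k + d₀) • e (k + d₀))
      = fun k => (ξ i (d₀ + k) * s (d₀ + k)) • e (d₀ + k) := by
    ext k
    rw [perturbedGridCoord, if_neg (by omega), add_comm]
  rw [perturbedGridInput, hhead, add_sub_cancel_left, htail]
  refine (Orthonormal.summable_smul (v := fun k => e (d₀ + k))
    (e.orthonormal.comp _ (add_right_injective d₀)) ?_).hasSum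
  refine hssum.of_nonneg_of_le (fun k => by positivity) fun k => ?_
  rw [norm_mul, mul_pow, Real.norm_eq_abs, Real.norm_eq_abs, sq_abs (s _)]
  exact mul_le_of_le_one_left (sq_nonneg _) (pow_le_one₀ (abs_nonneg _) (hξ i _))

theorem hasSum_sq_perturbedGridCoord_sub (hξ : ∀ i k, |ξ i k| ≤ 1)
    (hssum : Summable fun k : ℕ => s (d₀ + k) ^ 2) (i j : ℕ) :
    HasSum (fun k => (perturbedGridCoord d₀ δ ξ s x i k - perturbedGridCoord d₀ δ ξ s x j k) ^ 2)
      (‖perturbedGridInput e d₀ δ ξ s x i - perturbedGridInput e d₀ δ ξ s x j‖ ^ 2) :=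
  e.hasSum_sq_of_hasSum <| by
    simpa only [sub_smul] using
      (hasSum_perturbedGridInput e hξ hssum i).sub (hasSum_perturbedGridInput e hξ hssum j)

theorem perturbedGridCoord_sub_of_lt {k : ℕ} (hk : k < d₀) (i j : ℕ) :
    perturbedGridCoord d₀ δ ξ s x i k - perturbedGridCoord d₀ δ ξ s x j k
      = ((x i k : ℝ) - x j k) + δ * (ξ i k - ξ j k) := by
  rw [perturbedGridCoord, perturbedGridCoord, if_pos hk, if_pos hk, add_sub_add_comm, mul_sub]

theorem abs_perturbedGridCoord_sub_le_norm (hξ : ∀ i k, |ξ i k| ≤ 1)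
    (hssum : Summable fun k : ℕ => s (d₀ + k) ^ 2) (i j k : ℕ) :
    |perturbedGridCoord d₀ δ ξ s x i k - perturbedGridCoord d₀ δ ξ s x j k|
      ≤ ‖perturbedGridInput e d₀ δ ξ s x i - perturbedGridInput e d₀ δ ξ s x j‖ :=
  abs_le_of_sq_le_sq (le_hasSum (hasSum_sq_perturbedGridCoord_sub e hξ hssum i j) k
    fun _ _ => sq_nonneg _) (norm_nonneg _)

theorem norm_perturbedGridInput_sub_sq_le (hδ0 : 0 ≤ δ) (hδ : δ < 1 / 2)
    (hξ : ∀ i k, |ξ i k| ≤ 1) (hssum : Summable fun k : ℕ => s (d₀ + k) ^ 2) {i j : ℕ}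
    (hx : ∀ k < d₀, |(x i k : ℝ) - x j k| ≤ 1) :
    ‖perturbedGridInput e d₀ δ ξ s x i - perturbedGridInput e d₀ δ ξ s x j‖ ^ 2
      ≤ 4 * (d₀ + ∑' k, s (d₀ + k) ^ 2) := by
  have h := hasSum_sq_perturbedGridCoord_sub (δ := δ) (x := x) e hξ hssum i j
  have hξ2 : ∀ k, |ξ i k - ξ j k| ≤ 2 := fun k =>
    (abs_sub _ _).trans (by linarith [hξ i k, hξ j k])
  have hhead : ∀ k < d₀,
      (perturbedGridCoord d₀ δ ξ s x i k - perturbedGridCoord d₀ δ ξ s x j k) ^ 2 ≤ 4 := by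
    intro k hk
    have hΔ : |((x i k : ℝ) - x j k) + δ * (ξ i k - ξ j k)| ≤ 2 := by
      refine (abs_add_le _ _).trans ?_
      rw [abs_mul, abs_of_nonneg hδ0]
      nlinarith [hx k hk, hξ2 k]
    rw [perturbedGridCoord_sub_of_lt hk]
    nlinarith [abs_le.1 hΔ]
  have htail : ∀ k, (perturbedGridCoord d₀ δ ξ s x i (k + d₀)
      - perturbedGridCoord d₀ δ ξ s x j (k + d₀)) ^ 2 ≤ 4 * s (d₀ + k) ^ 2 := by
    intro k
    rw [perturbedGridCoord, perturbedGridCoord, if_neg (by omega), if_neg (by omega), add_comm,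
      ← sub_mul, mul_pow]
    gcongr
    nlinarith [abs_le.1 (hξ2 (d₀ + k))]
  rw [← h.tsum_eq, ← h.summable.sum_add_tsum_nat_add d₀, mul_add, ← tsum_mul_left]
  exact add_le_add
    (by simpa [mul_comm] using Finset.sum_le_sum fun k hk => hhead k (Finset.mem_range.1 hk))
    (Summable.tsum_le_tsum htail ((summable_nat_add_iff d₀).2 h.summable) (hssum.mul_left 4))

theorem exists_perturbedGrid_neighbor (hd₀ : 0 < d₀) (hδ0 : 0 ≤ δ) (hδ : δ < 1 / 2)
    (hξ : ∀ i k, |ξ i k| ≤ 1) (hssum : Summable fun k : ℕ => s (d₀ + k) ^ 2) {m : ℕ} (hm : 2 ≤ m)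
    (hgrid : Finset.image (fun i => fun k : Fin d₀ => x i (k : ℕ)) (Finset.range (m ^ d₀))
      = Fintype.piFinset fun _ : Fin d₀ => Finset.Icc 1 m)
    {i : ℕ} (hi : i < m ^ d₀) :
    ∃ j < m ^ d₀,
      1 - 2 * δ ≤ ‖perturbedGridInput e d₀ δ ξ s x i - perturbedGridInput e d₀ δ ξ s x j‖ ∧
      ‖perturbedGridInput e d₀ δ ξ s x i - perturbedGridInput e d₀ δ ξ s x j‖
        ≤ √(4 * (d₀ + ∑' k, s (d₀ + k) ^ 2)) := by
  obtain ⟨j, hj, hx₀, hx⟩ := exists_grid_neighbor hm hgrid hi ⟨0, hd₀⟩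
  refine ⟨j, hj, ?_, Real.le_sqrt_of_sq_le <|
    norm_perturbedGridInput_sub_sq_le e hδ0 hδ hξ hssum fun k hk => hx ⟨k, hk⟩⟩
  have hcoord := abs_perturbedGridCoord_sub_le_norm (δ := δ) (x := x) e hξ hssum i j 0
  rw [perturbedGridCoord_sub_of_lt hd₀] at hcoord
  have hξ0 : |δ * (ξ i 0 - ξ j 0)| ≤ 2 * δ := by
    rw [abs_mul, abs_of_nonneg hδ0]
    nlinarith [abs_sub (ξ i 0) (ξ j 0), hξ i 0, hξ j 0]
  calc 1 - 2 * δ ≤ |(x i 0 : ℝ) - x j 0| - |δ * (ξ i 0 - ξ j 0)| := by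
        simp only at hx₀
        linarith
    _ ≤ _ := (abs_sub_abs_le_abs_add _ _).trans hcoord

end PerturbedGrid

theorem mul_exp_neg_mul_le_mul_exp_neg_mul {a b g θ : ℝ} (ha : 0 ≤ a) (hag : a ≤ g) (hgb : g ≤ b)
    (hθ : 0 ≤ θ) : a * Real.exp (-θ * b) ≤ g * Real.exp (-θ * g) :=
  mul_le_mul hag (Real.exp_le_exp.2 (by nlinarith)) (Real.exp_pos _).le (ha.trans hag)

theorem perturbedGrid_exponential_positivity_general
    {H : Type*} [NormedAddCommGroup H] [InnerProductSpace ℝ H] [CompleteSpace H]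
    (e : HilbertBasis ℕ ℝ H)
    (d₀ : ℕ) (hd₀ : 1 ≤ d₀)
    (δ : ℝ) (hδ0 : 0 ≤ δ) (hδ : δ < 1 / 2)
    (ξ : ℕ → ℕ → ℝ) (hξ : ∀ i k, |ξ i k| ≤ 1)
    (s : ℕ → ℝ)
    (hssum : Summable fun k : ℕ => s (d₀ + k) ^ 2)
    -- the grid enumeration property: {x_1, …, x_{m^{d₀}}} = {1, …, m}^{d₀}
    (x : ℕ → ℕ → ℕ)
    (hgrid : ∀ m : ℕ, 1 ≤ m →
      Finset.image (fun i => fun k : Fin d₀ => x i (k : ℕ)) (Finset.range (m ^ d₀))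
        = Fintype.piFinset fun _ : Fin d₀ => Finset.Icc 1 m)
    (θ₁ θ₂ : ℝ) (hθ₁ : 0 < θ₁) (hθ₂ : 0 < θ₂)
    (lam₁ lam₂ : ℝ) (hlam : (lam₁, lam₂) ≠ (0, 0)) :
    ∃ β > (0 : ℝ), ∀ᶠ n : ℕ in atTop,
      β ≤ (1 / (n : ℝ)) * ∑ i ∈ Finset.range n, ∑ j ∈ Finset.range n,
        ((lam₁ - lam₂ * θ₁ *
            ‖perturbedGridInput e d₀ δ ξ s x i - perturbedGridInput e d₀ δ ξ s x j‖)
          * Real.exp (-θ₂ *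
            ‖perturbedGridInput e d₀ δ ξ s x i - perturbedGridInput e d₀ δ ξ s x j‖)) ^ 2 := by
  set F := perturbedGridInput e d₀ δ ξ s x
  set t : ℕ → ℕ → ℝ := fun i j =>
    ((lam₁ - lam₂ * θ₁ * ‖F i - F j‖) * Real.exp (-θ₂ * ‖F i - F j‖)) ^ 2 with ht
  suffices ∃ c > 0, ∀ m, 2 ≤ m → ∀ i < m ^ d₀, ∃ j < m ^ d₀, c ≤ t i j by
    obtain ⟨c, hc, hct⟩ := this
    exact ⟨c / 2 ^ d₀, by positivity,
      eventually_le_average_of_exists_le (by omega) (fun i j => sq_nonneg _) hc.le hct⟩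
  rcases ne_or_eq lam₁ 0 with hlam₁ | rfl
  · exact ⟨lam₁ ^ 2, by positivity, fun m _ i hi => ⟨i, hi, by simp [t]⟩⟩
  have hlam₂ : lam₂ ≠ 0 := by simpa using hlam
  set a := 1 - 2 * δ
  have ha : 0 < a := by linarith
  set b := √(4 * (d₀ + ∑' k, s (d₀ + k) ^ 2))
  refine ⟨(lam₂ * θ₁) ^ 2 * (a * Real.exp (-θ₂ * b)) ^ 2, by positivity, fun m hm i hi => ?_⟩
  obtain ⟨j, hj, hlow, hup⟩ :=
    exists_perturbedGrid_neighbor e hd₀ hδ0 hδ hξ hssum hm (hgrid m (by omega)) hi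
  refine ⟨j, hj, ?_⟩
  calc (lam₂ * θ₁) ^ 2 * (a * Real.exp (-θ₂ * b)) ^ 2
      ≤ (lam₂ * θ₁) ^ 2 * (‖F i - F j‖ * Real.exp (-θ₂ * ‖F i - F j‖)) ^ 2 := by
        refine mul_le_mul_of_nonneg_left (pow_le_pow_left₀ (by positivity) ?_ 2) (sq_nonneg _)
        exact mul_exp_neg_mul_le_mul_exp_neg_mul ha.le hlow hup hθ₂.le
    _ = t i j := by rw [ht]; ring

/-- Example 1, positivity of the θ-derivatives (Condition 6) for the exponential kernel
`K_θ(f,g) = θ₁ e^{−θ₂‖f−g‖}` on the perturbed grid with grid enumeration: for every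
`θ₀ = (θ₁,θ₂) ∈ (0,∞)²` and every `(λ₁,λ₂) ≠ (0,0)`,
`liminf_n (1/n) Σ_{i,j} ((λ₁ − λ₂ θ₁ g_{ij}) e^{−θ₂ g_{ij}})² > 0`. -/
theorem perturbedGrid_exponential_positivity
    {H : Type*} [NormedAddCommGroup H] [InnerProductSpace ℝ H] [CompleteSpace H]
    (e : HilbertBasis ℕ ℝ H)
    (d₀ : ℕ) (hd₀ : 1 ≤ d₀)
    (δ : ℝ) (hδ0 : 0 ≤ δ) (hδ : δ < 1 / 2)
    (ξ : ℕ → ℕ → ℝ) (hξ : ∀ i k, |ξ i k| ≤ 1)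
    (s : ℕ → ℝ) (hs0 : ∀ k, d₀ ≤ k → 0 ≤ s k)
    (hssum : Summable fun k : ℕ => s (d₀ + k) ^ 2)
    -- the grid enumeration property: {x_1, …, x_{m^{d₀}}} = {1, …, m}^{d₀}
    (x : ℕ → ℕ → ℕ)
    (hgrid : ∀ m : ℕ, 1 ≤ m →
      Finset.image (fun i => fun k : Fin d₀ => x i (k : ℕ)) (Finset.range (m ^ d₀))
        = Fintype.piFinset fun _ : Fin d₀ => Finset.Icc 1 m)
    (θ₁ θ₂ : ℝ) (hθ₁ : 0 < θ₁) (hθ₂ : 0 < θ₂)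
    (lam₁ lam₂ : ℝ) (hlam : (lam₁, lam₂) ≠ (0, 0)) :
    ∃ β > (0 : ℝ), ∀ᶠ n : ℕ in atTop,
      β ≤ (1 / (n : ℝ)) * ∑ i ∈ Finset.range n, ∑ j ∈ Finset.range n,
        ((lam₁ - lam₂ * θ₁ *
            ‖perturbedGridInput e d₀ δ ξ s x i - perturbedGridInput e d₀ δ ξ s x j‖)
          * Real.exp (-θ₂ *
            ‖perturbedGridInput e d₀ δ ξ s x i - perturbedGridInput e d₀ δ ξ s x j‖)) ^ 2 :=
  perturbedGrid_exponential_positivity_general e d₀ hd₀ δ hδ0 hδ ξ hξ s hssum x hgrid θ₁ θ₂ hθ₁ hθ₂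
    lam₁ lam₂ hlam
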